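/- Let 0 < s < 1/2, let φ₁ : ℝ → ℝ be measurable, and let φ₂ : ℝ → ℂ with φ₂ ∈ L²(ℝ) ∩ L^{2/(1−2s)}(ℝ). Then the function x ↦ e^{iφ₁(x)} φ₂(x) satisfies [e^{iφ₁} φ₂]_{s,2} ≤ ‖φ₂‖_{L^{2/(1−2s)}} · [φ₁]_{s,1/s} + [φ₂]_{s,2}. -/

import Mathlib

/-!
Put `Φ = e^{iφ₁} φ₂`. For a shift `y`,
`Φ(x - y) - Φ(x) = e^{iφ₁(x-y)} (φ₂(x - y) - φ₂(x)) + φ₂(x) (e^{iφ₁(x-y)} - e^{iφ₁(x)})`.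
The first term has modulus `|φ₂(x - y) - φ₂(x)|`; since `|e^{ia} - e^{ib}| ≤ |a - b|`, Hölder's
inequality with `1/2 = (1 - 2s)/2 + s` bounds the `L²` norm of the second by
`‖φ₂‖_{2/(1-2s)} ‖φ₁(· - y) - φ₁‖_{1/s}`. Hence the `L^p` moduli of continuity satisfy
`ω₂ Φ ≤ ‖φ₂‖_{2/(1-2s)} ω_{1/s} φ₁ + ω₂ φ₂` pointwise, and `[·]_{s,p}` is the `L²` norm of `ω_p`
against `dt / t^{1+2s}` on `(0, ∞)`, so Minkowski's inequality concludes.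
-/

open MeasureTheory Complex ENNReal

/-- The Besov-type seminorm
`[f]_{s,p} = (∫₀^∞ t^{−1−2s} (sup_{|y|≤t} ‖f(·−y) − f‖_{L^p})² dt)^{1/2} ∈ [0,∞]`. -/
noncomputable def besovSeminorm {E : Type*} [NormedAddCommGroup E]
    (s : ℝ) (p : ℝ≥0∞) (f : ℝ → E) : ℝ≥0∞ :=
  (∫⁻ t in Set.Ioi (0:ℝ),
      ENNReal.ofReal (t ^ (-1 - 2*s)) *
        (⨆ (y : ℝ) (_ : |y| ≤ t), eLpNorm (fun x => f (x - y) - f x) p volume) ^ 2)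
    ^ ((1:ℝ)/2)

theorem norm_exp_I_mul_ofReal_sub_exp_I_mul_ofReal_le (a b : ℝ) :
    ‖exp (I * a) - exp (I * b)‖ ≤ |a - b| := by
  have h : exp (I * a) - exp (I * b) = exp (I * b) * (exp (I * ↑(a - b)) - 1) := by
    rw [mul_sub, mul_one, ← Complex.exp_add]
    push_cast
    ring_nf
  rw [h, norm_mul, mul_comm I, Complex.norm_exp_ofReal_mul_I, one_mul]
  exact Real.norm_exp_I_mul_ofReal_sub_one_le

theorem eLpNorm_exp_mul_sub_exp_mul_le {α : Type*} [MeasurableSpace α] {μ : Measure α}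
    {p q r : ℝ≥0∞} [ENNReal.HolderTriple q r p] (hp : 1 ≤ p) {a b : α → ℝ} {u v : α → ℂ}
    (ha : AEMeasurable a μ) (hb : AEMeasurable b μ)
    (hu : AEStronglyMeasurable u μ) (hv : AEStronglyMeasurable v μ) :
    eLpNorm (fun x => exp (I * a x) * u x - exp (I * b x) * v x) p μ
      ≤ eLpNorm v q μ * eLpNorm (a - b) r μ + eLpNorm (u - v) p μ := by
  have hea : AEStronglyMeasurable (fun x => exp (I * a x)) μ := by fun_prop
  have heb : AEStronglyMeasurable (fun x => exp (I * b x)) μ := by fun_prop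
  have hsplit : (fun x => exp (I * a x) * u x - exp (I * b x) * v x)
      = (v • fun x => exp (I * a x) - exp (I * b x)) + fun x => exp (I * a x) * (u - v) x := by
    ext x
    simp only [Pi.add_apply, Pi.sub_apply, smul_eq_mul, Pi.mul_apply]
    ring
  have hholder : eLpNorm (v • fun x => exp (I * a x) - exp (I * b x)) p μ
      ≤ eLpNorm v q μ * eLpNorm (a - b) r μ := by
    refine (eLpNorm_smul_le_mul_eLpNorm (q := r) (hea.sub heb) hv).trans
      (mul_le_mul_right (eLpNorm_mono fun x => ?_) _)
    simpa using norm_exp_I_mul_ofReal_sub_exp_I_mul_ofReal_le (a x) (b x)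
  have hphase : eLpNorm (fun x => exp (I * a x) * (u - v) x) p μ = eLpNorm (u - v) p μ :=
    eLpNorm_congr_norm_ae <| .of_forall fun x => by
      rw [norm_mul, mul_comm I, Complex.norm_exp_ofReal_mul_I, one_mul]
  calc _ = eLpNorm ((v • fun x => exp (I * a x) - exp (I * b x))
          + fun x => exp (I * a x) * (u - v) x) p μ := by rw [hsplit]
    _ ≤ _ := eLpNorm_add_le (hv.smul (hea.sub heb)) (hea.mul (hu.sub hv)) hp
    _ ≤ _ := add_le_add hholder hphase.le

theorem eLpNorm_le_mul_eLpNorm_add_eLpNorm {α : Type*} [MeasurableSpace α] {μ : Measure α}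
    {p : ℝ≥0∞} (hp : 1 ≤ p) {c : ℝ≥0∞} {f g h : α → ℝ≥0∞} (hg : AEMeasurable g μ)
    (hh : AEMeasurable h μ) (hfgh : ∀ x, f x ≤ c * g x + h x) :
    eLpNorm f p μ ≤ c * eLpNorm g p μ + eLpNorm h p μ :=
  calc eLpNorm f p μ ≤ eLpNorm (fun x => c * g x + h x) p μ :=
        eLpNorm_mono_enorm (by simpa using hfgh)
    _ ≤ eLpNorm (fun x => c * g x) p μ + eLpNorm h p μ :=
      eLpNorm_add_le (hg.const_mul c).aestronglyMeasurable hh.aestronglyMeasurable hp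
    _ ≤ c * eLpNorm g p μ + eLpNorm h p μ := by
      gcongr
      exact eLpNorm_le_mul_eLpNorm_of_ae_le_mul'' _ hg.aestronglyMeasurable
        (.of_forall fun x => by simp)

noncomputable def translationModulus {E : Type*} [NormedAddCommGroup E]
    (p : ℝ≥0∞) (f : ℝ → E) (t : ℝ) : ℝ≥0∞ :=
  ⨆ (y : ℝ) (_ : |y| ≤ t), eLpNorm (fun x => f (x - y) - f x) p volume

theorem translationModulus_monotone {E : Type*} [NormedAddCommGroup E] (p : ℝ≥0∞) (f : ℝ → E) :
    Monotone (translationModulus p f) := fun _ _ hst =>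
  biSup_mono fun _ hy => hy.trans hst

theorem translationModulus_exp_mul_le {p q r : ℝ≥0∞} [ENNReal.HolderTriple q r p] (hp : 1 ≤ p)
    {φ₁ : ℝ → ℝ} {φ₂ : ℝ → ℂ} (hφ₁ : AEMeasurable φ₁) (hφ₂ : AEStronglyMeasurable φ₂) (t : ℝ) :
    translationModulus p (fun x => exp (I * φ₁ x) * φ₂ x) t
      ≤ eLpNorm φ₂ q volume * translationModulus r φ₁ t + translationModulus p φ₂ t := by
  refine iSup₂_le fun y hy => ?_
  have hshift := measurePreserving_sub_right volume y
  refine (eLpNorm_exp_mul_sub_exp_mul_le (q := q) (r := r) hp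
    (hφ₁.comp_quasiMeasurePreserving hshift.quasiMeasurePreserving) hφ₁
    (hφ₂.comp_measurePreserving hshift) hφ₂).trans ?_
  gcongr
  · exact le_iSup₂ (f := fun y (_ : |y| ≤ t) =>
      eLpNorm (fun x => φ₁ (x - y) - φ₁ x) r volume) y hy
  · exact le_iSup₂ (f := fun y (_ : |y| ≤ t) =>
      eLpNorm (fun x => φ₂ (x - y) - φ₂ x) p volume) y hy

noncomputable def besovMeasure (s : ℝ) : Measure ℝ :=
  (volume.restrict (Set.Ioi 0)).withDensity fun t => ENNReal.ofReal (t ^ (-1 - 2 * s))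

theorem besovSeminorm_eq_eLpNorm_translationModulus {E : Type*} [NormedAddCommGroup E]
    (s : ℝ) (p : ℝ≥0∞) (f : ℝ → E) :
    besovSeminorm s p f = eLpNorm (translationModulus p f) 2 (besovMeasure s) := by
  rw [eLpNorm_eq_lintegral_rpow_enorm_toReal two_ne_zero ofNat_ne_top, besovMeasure,
    lintegral_withDensity_eq_lintegral_mul _ (by fun_prop)
      ((translationModulus_monotone p f).measurable.enorm.pow_const _)]
  simp [besovSeminorm, translationModulus]

theorem holderTriple_besov_exponents {s : ℝ} (hs : 0 < s) (hs' : s < 1/2) :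
    ENNReal.HolderTriple (ENNReal.ofReal (2 / (1 - 2 * s))) (ENNReal.ofReal (1 / s)) 2 := by
  have h : (0:ℝ) < 1 - 2 * s := by linarith
  constructor
  rw [← ENNReal.ofReal_inv_of_pos (by positivity), ← ENNReal.ofReal_inv_of_pos (by positivity),
    ← ENNReal.ofReal_add (by positivity) (by positivity), inv_div, inv_div, div_one,
    show (1 - 2 * s) / 2 + s = (2:ℝ)⁻¹ by ring, ENNReal.ofReal_inv_of_pos two_pos,
    ENNReal.ofReal_ofNat]

theorem besov_exp_mul_bound_low_general (s : ℝ) (hs : 0 < s) (hs' : s < 1/2)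
    (φ₁ : ℝ → ℝ) (hφ₁ : Measurable φ₁)
    (φ₂ : ℝ → ℂ) (h2 : MemLp φ₂ 2 volume) :
    besovSeminorm s 2 (fun x => Complex.exp (Complex.I * (↑(φ₁ x):ℂ)) * φ₂ x)
      ≤ eLpNorm φ₂ (ENNReal.ofReal (2/(1-2*s))) volume
          * besovSeminorm s (ENNReal.ofReal (1/s)) φ₁
        + besovSeminorm s 2 φ₂ := by
  have := holderTriple_besov_exponents hs hs'
  simp only [besovSeminorm_eq_eLpNorm_translationModulus]
  exact eLpNorm_le_mul_eLpNorm_add_eLpNorm one_le_two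
    (translationModulus_monotone _ φ₁).measurable.aemeasurable
    (translationModulus_monotone 2 φ₂).measurable.aemeasurable
    (translationModulus_exp_mul_le one_le_two hφ₁.aemeasurable h2.1)

/-- for `0 < s < 1/2`,
`[e^{iφ₁} φ₂]_{s,2} ≤ ‖φ₂‖_{L^{2/(1−2s)}} [φ₁]_{s,1/s} + [φ₂]_{s,2}`. -/
theorem besov_exp_mul_bound_low (s : ℝ) (hs : 0 < s) (hs' : s < 1/2)
    (φ₁ : ℝ → ℝ) (hφ₁ : Measurable φ₁)
    (φ₂ : ℝ → ℂ) (h2 : MemLp φ₂ 2 volume)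
    (hq : MemLp φ₂ (ENNReal.ofReal (2/(1-2*s))) volume) :
    besovSeminorm s 2 (fun x => Complex.exp (Complex.I * (↑(φ₁ x):ℂ)) * φ₂ x)
      ≤ eLpNorm φ₂ (ENNReal.ofReal (2/(1-2*s))) volume
          * besovSeminorm s (ENNReal.ofReal (1/s)) φ₁
        + besovSeminorm s 2 φ₂ :=
  besov_exp_mul_bound_low_general s hs hs' φ₁ hφ₁ φ₂ h2
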